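/- Suppose in addition to the identical-rows assumption on P̄ that a_1 = a_{N+1} = 1/2 (from each of states 0 and N+1, the chain moves to 0 or N+1 with probability 1/2 each), that p_0 = p_{N+1}, and that the emission distributions of states 0 and N+1 are arbitrary. Then the predicted probability mass on the set {0, N+1} is (Pᵀ₂π)(0) + (Pᵀ₂π)(N+1) = π(0) + π(N+1) + s·(p_0 + p_{N+1}), and moreover (Pᵀ₂π)(0) = (Pᵀ₂π)(N+1) whenever we track only the sum: each equals (π(0)+π(N+1))/2 + s·p_0. Consequently the Bayes-updated sum T(π,y)(0) + T(π,y)(N+1) is a function only of π(0)+π(N+1) and y. -/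
import Mathlib


open Finset

/-- States {0, 1, ..., N+1}: `lo` is state 0, `mid i` are states 1,...,N, `hi` is state N+1. -/
inductive St (N : ℕ) : Type
  | lo : St N
  | mid : Fin N → St N
  | hi : St N
  deriving DecidableEq, Fintype

/-- Bayes belief update T(π,y)(j) = B_j(y)·(P₂ᵀπ)(j) / Σₖ B_k(y)·(P₂ᵀπ)(k). -/
noncomputable def bayesT {N : ℕ} {Y : Type*} [Fintype Y] (B : St N → Y → ℝ)
    (P2 : St N → St N → ℝ) (π : St N → ℝ) (y : Y) : St N → ℝ :=
  fun j => B j y * (∑ i, π i * P2 i j) / ∑ k, B k y * (∑ i, π i * P2 i k)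

def stEquiv (N : ℕ) : St N ≃ Bool ⊕ Fin N where
  toFun x := match x with
    | .lo => .inl false
    | .hi => .inl true
    | .mid i => .inr i
  invFun x := match x with
    | .inl false => .lo
    | .inl true => .hi
    | .inr i => .mid i
  left_inv x := by cases x <;> rfl
  right_inv x := by rcases x with (_|_)|i <;> rfl

lemma sum_St {N : ℕ} (f : St N → ℝ) :
    ∑ x, f x = f .lo + f .hi + ∑ i, f (.mid i) := by
  rw [← Equiv.sum_comp (stEquiv N).symm f, Fintype.sum_sum_type, Fintype.sum_bool]
  simp [stEquiv]
  ring

/-- Theorem 3 setting: rows 1..N of P₂ equal a common p with p₀ = p_{N+1}, and rows 0 and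
N+1 both put mass 1/2 on each of states 0 and N+1. Then the predicted mass on {0, N+1} is
π(0)+π(N+1)+s·(p₀+p_{N+1}), each of the two predicted components equals
(π(0)+π(N+1))/2 + s·p₀, and the Bayes-updated sum T(π,y)(0)+T(π,y)(N+1) depends on the
belief only through the sum π(0)+π(N+1). -/
theorem stmt4 {N : ℕ} {Y : Type*} [Fintype Y]
    (p : St N → ℝ) (hpnn : ∀ j, 0 ≤ p j) (hpsum : ∑ j, p j = 1)
    (hp0 : p St.lo = p St.hi)
    (P2 : St N → St N → ℝ)
    (hrowLo : ∀ j, P2 St.lo j = if j = St.lo then 1/2 else if j = St.hi then 1/2 else 0)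
    (hrowHi : ∀ j, P2 St.hi j = if j = St.lo then 1/2 else if j = St.hi then 1/2 else 0)
    (hrowMid : ∀ i j, P2 (St.mid i) j = p j)
    (B : St N → Y → ℝ) (hB : ∀ j y, 0 < B j y)
    (π πt : St N → ℝ)
    (hπnn : ∀ i, 0 ≤ π i) (hπsum : ∑ i, π i = 1)
    (hπtnn : ∀ i, 0 ≤ πt i) (hπtsum : ∑ i, πt i = 1)
    (hq : π St.lo + π St.hi = πt St.lo + πt St.hi) :
    (∑ i, π i * P2 i St.lo) + (∑ i, π i * P2 i St.hi)
      = π St.lo + π St.hi + (1 - π St.lo - π St.hi) * (p St.lo + p St.hi) ∧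
    (∑ i, π i * P2 i St.lo)
      = (π St.lo + π St.hi) / 2 + (1 - π St.lo - π St.hi) * p St.lo ∧
    (∑ i, π i * P2 i St.hi)
      = (π St.lo + π St.hi) / 2 + (1 - π St.lo - π St.hi) * p St.lo ∧
    ∀ y : Y, bayesT B P2 π y St.lo + bayesT B P2 π y St.hi
      = bayesT B P2 πt y St.lo + bayesT B P2 πt y St.hi := by
  have hmass : ∀ (ρ : St N → ℝ), (∑ i, ρ i = 1) →
      ∑ i, ρ (.mid i) = 1 - ρ .lo - ρ .hi := by
    intro ρ hρ
    have := sum_St ρ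
    rw [hρ] at this
    linarith
  have hpred : ∀ (ρ : St N → ℝ), (∑ i, ρ i = 1) → ∀ j,
      ∑ i, ρ i * P2 i j =
        ρ .lo * P2 .lo j + ρ .hi * P2 .hi j + (1 - ρ .lo - ρ .hi) * p j := by
    intro ρ hρ j
    rw [sum_St (fun i => ρ i * P2 i j)]
    simp only [hrowMid, ← Finset.sum_mul, hmass ρ hρ]
  have hlo : ∑ i, π i * P2 i .lo
      = (π .lo + π .hi) / 2 + (1 - π .lo - π .hi) * p .lo := by
    rw [hpred π hπsum, hrowLo, hrowHi]; simp; ring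
  have hhi : ∑ i, π i * P2 i .hi
      = (π .lo + π .hi) / 2 + (1 - π .lo - π .hi) * p .lo := by
    rw [hpred π hπsum, hrowLo, hrowHi, ← hp0]; simp; ring
  refine ⟨by rw [hlo, hhi, ← hp0]; ring, hlo, hhi, ?_⟩
  intro y
  have key : ∀ j, ∑ i, π i * P2 i j = ∑ i, πt i * P2 i j := by
    intro j
    have h2 : 1 - π St.lo - π St.hi = 1 - πt St.lo - πt St.hi := by linarith
    rw [hpred π hπsum, hpred πt hπtsum, h2]
    cases j with
    | lo => rw [hrowLo, hrowHi]; simp; linarith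
    | hi => rw [hrowLo, hrowHi]; simp; linarith
    | mid i => rw [hrowLo, hrowHi]; simp
  simp only [bayesT, key]
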